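/- (Inductive step of Lemma 2, Slice-2 variant.) Fix 1 ≤ k < d and suppose Γ^(k) ∈ ℂ^{k×k} satisfies Σ_{m=1}^k Γ^(k)_{l,m} q'_m(μ) = g(μ, x_l) for all 1 ≤ l ≤ k and all μ ∈ 𝒫. Define Γ^(k+1) ∈ ℂ^{(k+1)×(k+1)} by: Γ^(k+1)_{l,m} = Γ^(k)_{l,m} for l,m ≤ k; Γ^(k+1)_{l,k+1} = 0 for l ≤ k; Γ^(k+1)_{k+1,k+1} = (δ'_k g)(μ_{k+1}, x_{k+1}); and Γ^(k+1)_{k+1,l} = κ_l for l ≤ k, where κ ∈ ℂ^k is the unique solution of Σ_{m=1}^k B'^(k)_{l,m} κ_m = g(μ_l, x_{k+1}) for all 1 ≤ l ≤ k. Then Σ_{m=1}^{k+1} Γ^(k+1)_{l,m} q'_m(μ) = g(μ, x_l) for all 1 ≤ l ≤ k+1 and all μ ∈ 𝒫. -/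

import Mathlib

theorem Fin.sum_ite_val_lt_eq_sum_castLE {M : Type*} [AddCommMonoid M] {k d : ℕ} (hk : k ≤ d)
    (f : Fin d → M) :
    ∑ m : Fin d, (if (m : ℕ) < k then f m else 0) = ∑ m : Fin k, f (Fin.castLE hk m) := by
  have hfilter : ({m : Fin d | (m : ℕ) < k} : Finset (Fin d)) = Finset.univ.map (Fin.castLEEmb hk) := by
    ext m
    simp only [Finset.mem_filter, Finset.mem_univ, true_and, Finset.mem_map, Fin.castLEEmb_apply]
    exact ⟨fun h => ⟨⟨m, h⟩, rfl⟩, by rintro ⟨m, _, rfl⟩; exact m.isLt⟩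
  rw [← Finset.sum_filter, hfilter, Finset.sum_map]
  rfl

theorem stmt11_general {P Ω : Type*}
    (g : P → Ω → ℂ) (d : ℕ)
    (x : Fin d → Ω) (μ : Fin d → P) (q' : Fin d → P → ℂ)
    (k : ℕ) (hk : k < d)
    (lam : Ω → Fin d → ℂ)
    -- λ(x) solves the rank-k Slice-2 EIM system with matrix B'^(k)_{l,m} = q'_m(μ_l)
    (hlam : ∀ (y : Ω) (l : Fin d), (l : ℕ) < k →
      ∑ m : Fin d, (if (m : ℕ) < k then q' m (μ l) * lam y m else 0) = g (μ l) y)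
    -- the residual δ'_k g is nonzero at (μ_{k+1}, x_{k+1})
    (hres : g (μ ⟨k, hk⟩) (x ⟨k, hk⟩) -
      ∑ m : Fin d, (if (m : ℕ) < k then lam (x ⟨k, hk⟩) m * q' m (μ ⟨k, hk⟩) else 0) ≠ 0)
    -- q'_{k+1} is the normalized residual
    (hqk : ∀ p : P, q' ⟨k, hk⟩ p =
      (g p (x ⟨k, hk⟩) -
        ∑ m : Fin d, (if (m : ℕ) < k then lam (x ⟨k, hk⟩) m * q' m p else 0)) /
      (g (μ ⟨k, hk⟩) (x ⟨k, hk⟩) -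
        ∑ m : Fin d, (if (m : ℕ) < k then lam (x ⟨k, hk⟩) m * q' m (μ ⟨k, hk⟩) else 0)))
    (Γk : Matrix (Fin k) (Fin k) ℂ)
    (hΓk : ∀ (l : Fin k) (p : P),
      ∑ m : Fin k, Γk l m * q' (Fin.castLE hk.le m) p = g p (x (Fin.castLE hk.le l)))
    (κ : Fin k → ℂ)
    (hκuniq : ∀ κ' : Fin k → ℂ,
      (∀ l : Fin k, ∑ m : Fin k,
        q' (Fin.castLE hk.le m) (μ (Fin.castLE hk.le l)) * κ' m =
        g (μ (Fin.castLE hk.le l)) (x ⟨k, hk⟩)) → κ' = κ)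
    (Γk1 : Matrix (Fin (k + 1)) (Fin (k + 1)) ℂ)
    (hG1 : ∀ l m : Fin k, Γk1 (Fin.castSucc l) (Fin.castSucc m) = Γk l m)
    (hG2 : ∀ l : Fin k, Γk1 (Fin.castSucc l) (Fin.last k) = 0)
    (hG3 : Γk1 (Fin.last k) (Fin.last k) =
      g (μ ⟨k, hk⟩) (x ⟨k, hk⟩) -
        ∑ m : Fin d, (if (m : ℕ) < k then lam (x ⟨k, hk⟩) m * q' m (μ ⟨k, hk⟩) else 0))
    (hG4 : ∀ l : Fin k, Γk1 (Fin.last k) (Fin.castSucc l) = κ l) :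
    ∀ (l : Fin (k + 1)) (p : P),
      ∑ m : Fin (k + 1), Γk1 l m * q' (Fin.castLE hk m) p = g p (x (Fin.castLE hk l)) := by
  have hcast (m : Fin k) : Fin.castLE hk m.castSucc = Fin.castLE hk.le m := rfl
  have hlast : Fin.castLE hk (Fin.last k) = ⟨k, hk⟩ := rfl
  -- uniqueness of the solution of the B'^(k) system identifies κ with λ(x_{k+1})
  have hκ_eq : κ = fun m => lam (x ⟨k, hk⟩) (Fin.castLE hk.le m) := by
    refine (hκuniq _ fun l => ?_).symm
    rw [← Fin.sum_ite_val_lt_eq_sum_castLE hk.le (fun m => q' m _ * lam _ m)]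
    exact hlam _ _ l.isLt
  -- `hinterp p` is `(I'_k g)(p, x_{k+1})` written with κ
  have hinterp (p : P) :
      ∑ m : Fin d, (if (m : ℕ) < k then lam (x ⟨k, hk⟩) m * q' m p else 0) =
        ∑ m : Fin k, κ m * q' (Fin.castLE hk.le m) p := by
    rw [Fin.sum_ite_val_lt_eq_sum_castLE hk.le (fun m => lam _ m * q' m p), hκ_eq]
  intro l p
  induction l using Fin.lastCases with
  | last =>
    -- the last row is interpolant plus residual
    rw [Fin.sum_univ_castSucc]
    simp only [hG3, hG4, hcast, hlast]
    rw [hqk p, mul_div_cancel₀ _ hres, hinterp]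
    ring
  | cast l =>
    rw [Fin.sum_univ_castSucc]
    simp only [hG1, hG2, hcast, zero_mul, add_zero]
    exact hΓk l p

/-- Inductive step of Lemma 2 (Slice-2 variant): given the change-of-basis matrix `Γ^(k)`
with `Σ_m Γ^(k)_{l,m} q'_m(μ) = g(μ, x_l)`, the matrix `Γ^(k+1)` built from `Γ^(k)`,
the residual value and the vector `κ` satisfies the same relation at rank `k+1`. -/
theorem stmt11 {P Ω : Type*} [Nonempty P] [Nonempty Ω]
    (g : P → Ω → ℂ) (d : ℕ)
    (x : Fin d → Ω) (μ : Fin d → P) (q' : Fin d → P → ℂ)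
    (k : ℕ) (hk1 : 1 ≤ k) (hk : k < d)
    (lam : Ω → Fin d → ℂ)
    -- λ(x) solves the rank-k Slice-2 EIM system with matrix B'^(k)_{l,m} = q'_m(μ_l)
    (hlam : ∀ (y : Ω) (l : Fin d), (l : ℕ) < k →
      ∑ m : Fin d, (if (m : ℕ) < k then q' m (μ l) * lam y m else 0) = g (μ l) y)
    -- the residual δ'_k g is nonzero at (μ_{k+1}, x_{k+1})
    (hres : g (μ ⟨k, hk⟩) (x ⟨k, hk⟩) -
      ∑ m : Fin d, (if (m : ℕ) < k then lam (x ⟨k, hk⟩) m * q' m (μ ⟨k, hk⟩) else 0) ≠ 0)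
    -- q'_{k+1} is the normalized residual
    (hqk : ∀ p : P, q' ⟨k, hk⟩ p =
      (g p (x ⟨k, hk⟩) -
        ∑ m : Fin d, (if (m : ℕ) < k then lam (x ⟨k, hk⟩) m * q' m p else 0)) /
      (g (μ ⟨k, hk⟩) (x ⟨k, hk⟩) -
        ∑ m : Fin d, (if (m : ℕ) < k then lam (x ⟨k, hk⟩) m * q' m (μ ⟨k, hk⟩) else 0)))
    (Γk : Matrix (Fin k) (Fin k) ℂ)
    (hΓk : ∀ (l : Fin k) (p : P),
      ∑ m : Fin k, Γk l m * q' (Fin.castLE hk.le m) p = g p (x (Fin.castLE hk.le l)))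
    (κ : Fin k → ℂ)
    -- κ is the solution of Σ_m B'^(k)_{l,m} κ_m = g(μ_l, x_{k+1})
    (hκ : ∀ l : Fin k, ∑ m : Fin k,
      q' (Fin.castLE hk.le m) (μ (Fin.castLE hk.le l)) * κ m =
      g (μ (Fin.castLE hk.le l)) (x ⟨k, hk⟩))
    (hκuniq : ∀ κ' : Fin k → ℂ,
      (∀ l : Fin k, ∑ m : Fin k,
        q' (Fin.castLE hk.le m) (μ (Fin.castLE hk.le l)) * κ' m =
        g (μ (Fin.castLE hk.le l)) (x ⟨k, hk⟩)) → κ' = κ)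
    (Γk1 : Matrix (Fin (k + 1)) (Fin (k + 1)) ℂ)
    (hG1 : ∀ l m : Fin k, Γk1 (Fin.castSucc l) (Fin.castSucc m) = Γk l m)
    (hG2 : ∀ l : Fin k, Γk1 (Fin.castSucc l) (Fin.last k) = 0)
    (hG3 : Γk1 (Fin.last k) (Fin.last k) =
      g (μ ⟨k, hk⟩) (x ⟨k, hk⟩) -
        ∑ m : Fin d, (if (m : ℕ) < k then lam (x ⟨k, hk⟩) m * q' m (μ ⟨k, hk⟩) else 0))
    (hG4 : ∀ l : Fin k, Γk1 (Fin.last k) (Fin.castSucc l) = κ l) :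
    ∀ (l : Fin (k + 1)) (p : P),
      ∑ m : Fin (k + 1), Γk1 l m * q' (Fin.castLE hk m) p = g p (x (Fin.castLE hk l)) :=
  stmt11_general g d x μ q' k hk lam hlam hres hqk Γk hΓk κ hκuniq Γk1 hG1 hG2 hG3 hG4
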